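/- arXiv:1604.02098 — 5 statements merged into one kernel-verified Lean document; each statement's English description precedes it below -/
import Mathlib

section
/- Let A be a skew left brace. Define λ_a(b) = a⁻¹(a∘b) and ρ_b(a) = (λ_a(b))'∘a∘b, where x' denotes the inverse of x in (A,∘). Then ρ defines a right action of the group (A,∘) on the set A; that is, ρ_1(a) = a and ρ_c(ρ_b(a)) = ρ_{b∘c}(a) for all a,b,c ∈ A. -/
structure SkewLeftBrace (A : Type*) [Group A] where
  circ : A → A → A
  one' : A
  inv' : A → A
  circ_assoc : ∀ a b c : A, circ (circ a b) c = circ a (circ b c)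
  one'_circ : ∀ a : A, circ one' a = a
  circ_one' : ∀ a : A, circ a one' = a
  inv'_circ : ∀ a : A, circ (inv' a) a = one'
  circ_inv' : ∀ a : A, circ a (inv' a) = one'
  compat : ∀ a b c : A, circ a (b * c) = circ a b * a⁻¹ * circ a c

namespace SkewLeftBrace

variable {A : Type*} [Group A] (B : SkewLeftBrace A)

lemma one'_eq : B.one' = 1 := by
  have h := B.compat B.one' 1 1
  rw [B.one'_circ, B.one'_circ, one_mul, mul_one, one_mul] at h
  -- h : 1 = B.one'⁻¹
  rw [← inv_inv B.one', ← h, inv_one]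

lemma eq_inv'_of (x y : A) (h : B.circ x y = B.one') : x = B.inv' y := by
  have : B.circ (B.circ x y) (B.inv' y) = B.circ x (B.circ y (B.inv' y)) :=
    B.circ_assoc x y (B.inv' y)
  rw [h, B.one'_circ, B.circ_inv', B.circ_one'] at this
  exact this.symm

lemma inv'_inv' (a : A) : B.inv' (B.inv' a) = a :=
  (B.eq_inv'_of a (B.inv' a) (B.circ_inv' a)).symm

lemma inv'_circ_rev (a b : A) :
    B.inv' (B.circ a b) = B.circ (B.inv' b) (B.inv' a) := by
  refine (B.eq_inv'_of _ _ ?_).symm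
  rw [B.circ_assoc, ← B.circ_assoc (B.inv' a) a b, B.inv'_circ, B.one'_circ, B.inv'_circ]

lemma circ_inv_right (a b : A) : B.circ a b⁻¹ = a * (B.circ a b)⁻¹ * a := by
  have h := B.compat a b b⁻¹
  rw [mul_inv_cancel, ← B.one'_eq, B.circ_one'] at h
  calc B.circ a b⁻¹ = (B.circ a b * a⁻¹)⁻¹ * (B.circ a b * a⁻¹ * B.circ a b⁻¹) := by group
    _ = (B.circ a b * a⁻¹)⁻¹ * a := by rw [← h]
    _ = a * (B.circ a b)⁻¹ * a := by group

theorem skewLeftBrace_lam_comp (lam : A → A → A)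
    (hlam : ∀ a b, lam a b = a⁻¹ * B.circ a b) (a b c : A) :
    lam (B.circ a b) c = lam a (lam b c) := by
  rw [hlam, hlam, hlam, B.compat, B.circ_inv_right, B.circ_assoc]
  group

theorem skewLeftBrace_lam_split (lam : A → A → A)
    (hlam : ∀ a b, lam a b = a⁻¹ * B.circ a b) (a b c : A) :
    lam a (B.circ b c) = lam a b * lam (B.circ a b) c := by
  rw [hlam, hlam, hlam, ← B.circ_assoc]
  group

theorem skewLeftBrace_lam_eq (lam : A → A → A)
    (hlam : ∀ a b, lam a b = a⁻¹ * B.circ a b) (p w : A) :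
    lam p w = B.circ p (B.inv' p * w) := by
  rw [hlam, B.compat, B.circ_inv', B.one'_eq]
  group

end SkewLeftBrace

/-- `ρ_b(a) = (λ_a(b))' ∘ a ∘ b` is a right action of `(A,∘)` on `A`. -/
theorem skewLeftBrace_rho_right_action {A : Type*} [Group A] (B : SkewLeftBrace A)
    (lam rho : A → A → A) (hlam : ∀ a b, lam a b = a⁻¹ * B.circ a b)
    (hrho : ∀ a b, rho b a = B.circ (B.circ (B.inv' (lam a b)) a) b) :
    (∀ a, rho B.one' a = a) ∧
    (∀ a b c, rho c (rho b a) = rho (B.circ b c) a) := by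
  have hinvone : B.inv' B.one' = B.one' := by
    have := B.inv'_circ B.one'
    rwa [B.circ_one'] at this
  constructor
  · intro a
    rw [hrho, B.circ_one', hlam, B.circ_one', inv_mul_cancel, ← B.one'_eq, hinvone,
      B.one'_circ]
  · intro a b c
    set v := lam a b with hv
    set w := lam (B.circ a b) c with hw
    have hd : rho b a = B.circ (B.inv' v) (B.circ a b) := by
      rw [hrho, B.circ_assoc]
    have hlamd : lam (B.circ (B.inv' v) (B.circ a b)) c = B.circ (B.inv' v) (v * w) := by
      rw [B.skewLeftBrace_lam_comp lam hlam, ← hw,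
        B.skewLeftBrace_lam_eq lam hlam, B.inv'_inv']
    calc rho c (rho b a)
        = B.circ (B.circ (B.inv' (lam (rho b a) c)) (rho b a)) c := hrho _ _
      _ = B.circ (B.inv' (lam (rho b a) c)) (B.circ (rho b a) c) := B.circ_assoc _ _ _
      _ = B.circ (B.inv' (B.circ (B.inv' v) (v * w)))
            (B.circ (B.circ (B.inv' v) (B.circ a b)) c) := by rw [hd, hlamd]
      _ = B.circ (B.circ (B.inv' (v * w)) v)
            (B.circ (B.inv' v) (B.circ a (B.circ b c))) := by
              rw [B.inv'_circ_rev, B.inv'_inv', B.circ_assoc (B.inv' v), B.circ_assoc a b c]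
      _ = B.circ (B.inv' (v * w))
            (B.circ v (B.circ (B.inv' v) (B.circ a (B.circ b c)))) := B.circ_assoc _ _ _
      _ = B.circ (B.inv' (v * w)) (B.circ a (B.circ b c)) := by
              rw [← B.circ_assoc v, B.circ_inv', B.one'_circ]
      _ = B.circ (B.inv' (lam a (B.circ b c))) (B.circ a (B.circ b c)) := by
              rw [B.skewLeftBrace_lam_split lam hlam, ← hv, ← hw]
      _ = rho (B.circ b c) a := by rw [hrho, B.circ_assoc]
end

section
/- Let A be a skew left brace and r(a,b) = (λ_a(b), ρ_b(a)) where λ_a(b) = a⁻¹(a∘b) and ρ_b(a) = (λ_a(b))'∘a∘b. Then r∘r = id (r is involutive) if and only if the group (A,·) is abelian. -/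
/-- `r ∘ r = id` if and only if the group `(A,·)` is abelian. -/
theorem skewLeftBrace_involutive_iff_comm {A : Type*} [Group A] (B : SkewLeftBrace A)
    (lam rho : A → A → A) (hlam : ∀ a b, lam a b = a⁻¹ * B.circ a b)
    (hrho : ∀ a b, rho b a = B.circ (B.circ (B.inv' (lam a b)) a) b)
    (r : A × A → A × A) (hr : ∀ a b, r (a, b) = (lam a b, rho b a)) :
    r ∘ r = id ↔ ∀ x y : A, x * y = y * x := by
  have hc : ∀ a b : A, B.circ a b = a * lam a b := by
    intro a b; rw [hlam, mul_inv_cancel_left]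
  have huv : ∀ a b : A, B.circ (lam a b) (rho b a) = B.circ a b := by
    intro a b
    rw [hrho, ← B.circ_assoc, ← B.circ_assoc, B.circ_inv', B.one'_circ]
  have hlam2 : ∀ a b : A, lam (lam a b) (rho b a) = (lam a b)⁻¹ * (a * lam a b) := by
    intro a b
    rw [hlam, huv, hc a b]
  constructor
  · intro h x y
    have key : ∀ a b : A, (lam a b)⁻¹ * (a * lam a b) = a := by
      intro a b
      have h1 : (r ∘ r) (a, b) = (a, b) := by rw [h]; rfl
      rw [Function.comp_apply, hr, hr] at h1
      have h2 : lam (lam a b) (rho b a) = a := congrArg Prod.fst h1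
      rw [hlam2] at h2
      exact h2
    have hsurj : ∀ a c : A, lam a (B.circ (B.inv' a) (a * c)) = c := by
      intro a c
      rw [hlam, ← B.circ_assoc, B.circ_inv', B.one'_circ, inv_mul_cancel_left]
    have hk := key x (B.circ (B.inv' x) (x * y))
    rw [hsurj] at hk
    rw [inv_mul_eq_iff_eq_mul] at hk
    exact hk
  · intro hcomm
    funext p
    obtain ⟨a, b⟩ := p
    rw [Function.comp_apply, hr, hr, id_eq]
    have h1 : lam (lam a b) (rho b a) = a := by
      rw [hlam2, hcomm a (lam a b), inv_mul_cancel_left]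
    have h2 : rho (rho b a) (lam a b) = b := by
      rw [hrho, h1, B.circ_assoc, huv, ← B.circ_assoc, B.inv'_circ, B.one'_circ]
    rw [h1, h2]
end

section
/- Let (A,∘) be a group together with a left action λ: (A,∘) → Sym(A) and a right action ρ of (A,∘) on A forming a matched pair (i.e. λ_a(b∘c) = λ_a(b)∘λ_{ρ_b(a)}(c), ρ_c(a∘b) = ρ_{λ_b(c)}(a)∘ρ_c(b), each λ_a and ρ_a a bijection) satisfying the compatibility a∘b = λ_a(b) ∘ ρ_b(a) for all a,b. Then the operation a·b := a ∘ λ_{a'}(b), where a' is the inverse of a in (A,∘), defines a group structure on A, and (A,·,∘) is a skew left brace. -/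
/-!
Writing `a · b := a ∘ λ_{a⁻¹}(b)`, one has `a ∘ b = a · λ_a(b)`, and the first matched-pair
identity together with the compatibility `a ∘ b = λ_a(b) ∘ ρ_b(a)` says exactly that every
`λ_a` is an endomorphism of `(A, ·)`. Associativity follows from
`(a · b) · c = a · (λ_{a⁻¹}(b) · λ_{a⁻¹}(c)) = a · λ_{a⁻¹}(b · c)`; `λ_a(a⁻¹)` is a right inverse
of `a`, hence a two-sided one; and the brace identity `a ∘ (b · c) = (a ∘ b) · ā · (a ∘ c)`,
with `ā` the `·`-inverse, is `a · λ_a(b · c) = a · λ_a(b) · λ_a(c)`.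
-/

theorem inv_op_self_of_op_inv_self {α : Type*} {op : α → α → α} {e : α} {inv : α → α}
    (assoc : ∀ a b c, op (op a b) c = op a (op b c)) (one_op : ∀ a, op e a = a)
    (op_one : ∀ a, op a e = a) (op_inv : ∀ a, op a (inv a) = e) (a : α) :
    op (inv a) a = e := by
  have h : inv (inv a) = a := calc
    inv (inv a) = op (op a (inv a)) (inv (inv a)) := by rw [op_inv, one_op]
    _ = a := by rw [assoc, op_inv, op_one]
  calc op (inv a) a = op (inv a) (inv (inv a)) := by rw [h]
    _ = e := op_inv _

namespace MatchedPair

variable {A : Type*} [Group A]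

def lamMul (lam : A → A → A) (a b : A) : A := a * lam a⁻¹ b

theorem lam_inv_lam {lam : A → A → A} (hlam_one : ∀ b, lam 1 b = b)
    (hlam_act : ∀ a b c, lam (a * b) c = lam a (lam b c)) (a x : A) :
    lam a⁻¹ (lam a x) = x := by
  rw [← hlam_act, inv_mul_cancel, hlam_one]

theorem lam_one_right {lam rho : A → A → A} (hrho_one : ∀ a, rho 1 a = a)
    (hcompat : ∀ a b, a * b = lam a b * rho b a) (a : A) : lam a 1 = 1 := by
  have h := hcompat a 1
  rwa [mul_one, hrho_one, right_eq_mul] at h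

theorem lamMul_lam {lam : A → A → A} (hlam_one : ∀ b, lam 1 b = b)
    (hlam_act : ∀ a b c, lam (a * b) c = lam a (lam b c)) (a b : A) :
    lamMul lam a (lam a b) = a * b := by
  rw [lamMul, lam_inv_lam hlam_one hlam_act]

theorem lam_lamMul {lam rho : A → A → A}
    (hlam_act : ∀ a b c, lam (a * b) c = lam a (lam b c))
    (hmp1 : ∀ a b c, lam a (b * c) = lam a b * lam (rho b a) c)
    (hcompat : ∀ a b, a * b = lam a b * rho b a) (a b c : A) :
    lam a (lamMul lam b c) = lamMul lam (lam a b) (lam a c) := by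
  have hrho : rho b a * b⁻¹ = (lam a b)⁻¹ * a := by
    rw [eq_inv_mul_of_mul_eq (hcompat a b).symm]; group
  rw [lamMul, lamMul, hmp1, ← hlam_act, hrho, hlam_act]

theorem lamMul_assoc {lam rho : A → A → A}
    (hlam_act : ∀ a b c, lam (a * b) c = lam a (lam b c))
    (hmp1 : ∀ a b c, lam a (b * c) = lam a b * lam (rho b a) c)
    (hcompat : ∀ a b, a * b = lam a b * rho b a) (a b c : A) :
    lamMul lam (lamMul lam a b) c = lamMul lam a (lamMul lam b c) := by
  calc lamMul lam (lamMul lam a b) c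
      = a * lamMul lam (lam a⁻¹ b) (lam a⁻¹ c) := by
        simp only [lamMul, mul_inv_rev, hlam_act, mul_assoc]
    _ = lamMul lam a (lamMul lam b c) := by
        rw [← lam_lamMul hlam_act hmp1 hcompat]; rfl

theorem lamMul_lam_self_inv {lam : A → A → A} (hlam_one : ∀ b, lam 1 b = b)
    (hlam_act : ∀ a b c, lam (a * b) c = lam a (lam b c)) (a : A) :
    lamMul lam a (lam a a⁻¹) = 1 := by
  rw [lamMul_lam hlam_one hlam_act, mul_inv_cancel]

theorem one_lamMul {lam : A → A → A} (hlam_one : ∀ b, lam 1 b = b) (b : A) :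
    lamMul lam 1 b = b := by
  rw [lamMul, inv_one, hlam_one, one_mul]

theorem lamMul_one {lam rho : A → A → A} (hrho_one : ∀ a, rho 1 a = a)
    (hcompat : ∀ a b, a * b = lam a b * rho b a) (a : A) : lamMul lam a 1 = a := by
  rw [lamMul, lam_one_right hrho_one hcompat, mul_one]

theorem lam_self_inv_lamMul {lam rho : A → A → A} (hlam_one : ∀ b, lam 1 b = b)
    (hlam_act : ∀ a b c, lam (a * b) c = lam a (lam b c)) (hrho_one : ∀ a, rho 1 a = a)
    (hmp1 : ∀ a b c, lam a (b * c) = lam a b * lam (rho b a) c)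
    (hcompat : ∀ a b, a * b = lam a b * rho b a) (a : A) :
    lamMul lam (lam a a⁻¹) a = 1 :=
  inv_op_self_of_op_inv_self (lamMul_assoc hlam_act hmp1 hcompat) (one_lamMul hlam_one)
    (lamMul_one hrho_one hcompat) (lamMul_lam_self_inv hlam_one hlam_act) a

theorem mul_lamMul {lam rho : A → A → A} (hlam_one : ∀ b, lam 1 b = b)
    (hlam_act : ∀ a b c, lam (a * b) c = lam a (lam b c)) (hrho_one : ∀ a, rho 1 a = a)
    (hmp1 : ∀ a b c, lam a (b * c) = lam a b * lam (rho b a) c)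
    (hcompat : ∀ a b, a * b = lam a b * rho b a) (a b c : A) :
    a * lamMul lam b c = lamMul lam (lamMul lam (a * b) (lam a a⁻¹)) (a * c) := by
  have assoc := lamMul_assoc hlam_act hmp1 hcompat
  have cancel_left : ∀ y, lamMul lam (lam a a⁻¹) (lamMul lam a y) = y := fun y => by
    rw [← assoc, lam_self_inv_lamMul hlam_one hlam_act hrho_one hmp1 hcompat,
      one_lamMul hlam_one]
  rw [← lamMul_lam hlam_one hlam_act, ← lamMul_lam hlam_one hlam_act a b,
    ← lamMul_lam hlam_one hlam_act a c, lam_lamMul hlam_act hmp1 hcompat, assoc, cancel_left,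
    assoc]

end MatchedPair

open MatchedPair in
theorem matchedPair_gives_skewLeftBrace_general {A : Type*} [Group A]
    (lam rho : A → A → A)
    (hlam_one : ∀ b, lam 1 b = b)
    (hlam_act : ∀ a b c, lam (a * b) c = lam a (lam b c))
    (hrho_one : ∀ a, rho 1 a = a)
    (hmp1 : ∀ a b c, lam a (b * c) = lam a b * lam (rho b a) c)
    (hcompat : ∀ a b, a * b = lam a b * rho b a)
    (m : A → A → A) (hm : ∀ a b, m a b = a * lam a⁻¹ b) :
    (∀ a b c, m (m a b) c = m a (m b c)) ∧
    (∀ a, m 1 a = a ∧ m a 1 = a) ∧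
    (∃ i : A → A, (∀ a, m a (i a) = 1 ∧ m (i a) a = 1) ∧
      (∀ a b c, a * m b c = m (m (a * b) (i a)) (a * c))) := by
  obtain rfl : m = lamMul lam := funext₂ hm
  exact ⟨lamMul_assoc hlam_act hmp1 hcompat,
    fun a => ⟨one_lamMul hlam_one a, lamMul_one hrho_one hcompat a⟩,
    fun a => lam a a⁻¹,
    fun a => ⟨lamMul_lam_self_inv hlam_one hlam_act a,
      lam_self_inv_lamMul hlam_one hlam_act hrho_one hmp1 hcompat a⟩,
    mul_lamMul hlam_one hlam_act hrho_one hmp1 hcompat⟩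

/-- From a matched pair of a group `(A,∘)` (written multiplicatively) with itself,
compatible via `a∘b = λ_a(b) ∘ ρ_b(a)`, the operation `a·b := a ∘ λ_{a'}(b)` defines a
group structure on `A`, and `(A,·,∘)` is a skew left brace. -/
theorem matchedPair_gives_skewLeftBrace {A : Type*} [Group A]
    (lam rho : A → A → A)
    (hbijl : ∀ a, Function.Bijective (lam a))
    (hbijr : ∀ a, Function.Bijective (rho a))
    (hlam_one : ∀ b, lam 1 b = b)
    (hlam_act : ∀ a b c, lam (a * b) c = lam a (lam b c))
    (hrho_one : ∀ a, rho 1 a = a)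
    (hrho_act : ∀ a b c, rho c (rho b a) = rho (b * c) a)
    (hmp1 : ∀ a b c, lam a (b * c) = lam a b * lam (rho b a) c)
    (hmp2 : ∀ a b c, rho c (a * b) = rho (lam b c) a * rho c b)
    (hcompat : ∀ a b, a * b = lam a b * rho b a)
    (m : A → A → A) (hm : ∀ a b, m a b = a * lam a⁻¹ b) :
    (∀ a b c, m (m a b) c = m a (m b c)) ∧
    (∀ a, m 1 a = a ∧ m a 1 = a) ∧
    (∃ i : A → A, (∀ a, m a (i a) = 1 ∧ m (i a) a = 1) ∧
      (∀ a b c, a * m b c = m (m (a * b) (i a)) (a * c))) :=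
  matchedPair_gives_skewLeftBrace_general lam rho hlam_one hlam_act hrho_one hmp1 hcompat m hm
end

section
/- Let g be a Lie algebra, V a g-module with action ρ, and π: g → V a bijective 1-cocycle (π([x,y]) = ρ(x)π(y) − ρ(y)π(x)). Then the product x * y := π⁻¹(ρ(x)π(y)) makes g into a left symmetric algebra, i.e. x*(y*z) − (x*y)*z = y*(x*z) − (y*x)*z, and moreover x*y − y*x = [x,y] for all x,y ∈ g. -/
/-- A bijective 1-cocycle `π : g → V` for a representation `ρ` of a Lie algebra `g` on
`V` makes `g` a left symmetric algebra via `x * y := π⁻¹(ρ(x)π(y))`, with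
`x*y − y*x = [x,y]`. -/
theorem bijective_one_cocycle_gives_leftSymmetric {k g V : Type*} [Field k]
    [LieRing g] [LieAlgebra k g] [AddCommGroup V] [Module k V]
    (ρ : g →ₗ[k] Module.End k V)
    (hρ : ∀ x y : g, ρ ⁅x, y⁆ = ρ x * ρ y - ρ y * ρ x)
    (π : g ≃ₗ[k] V)
    (hπ : ∀ x y : g, π ⁅x, y⁆ = ρ x (π y) - ρ y (π x))
    (star : g → g → g) (hstar : ∀ x y, star x y = π.symm (ρ x (π y))) :
    (∀ x y z : g, star x (star y z) - star (star x y) z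
        = star y (star x z) - star (star y x) z) ∧
    (∀ x y : g, star x y - star y x = ⁅x, y⁆) := by
  have h2 : ∀ x y : g, star x y - star y x = ⁅x, y⁆ := by
    intro x y
    apply π.injective
    simp [hstar, hπ, map_sub]
  refine ⟨fun x y z => ?_, h2⟩
  apply π.injective
  simp only [hstar, map_sub, LinearEquiv.apply_symm_apply]
  have key : ρ (star x y) (π z) - ρ (star y x) (π z) = ρ x (ρ y (π z)) - ρ y (ρ x (π z)) := by
    have : ρ (star x y) - ρ (star y x) = ρ ⁅x, y⁆ := by
      rw [← map_sub, h2]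
    calc ρ (star x y) (π z) - ρ (star y x) (π z)
        = (ρ (star x y) - ρ (star y x)) (π z) := by simp
      _ = ρ ⁅x, y⁆ (π z) := by rw [this]
      _ = ρ x (ρ y (π z)) - ρ y (ρ x (π z)) := by rw [hρ]; simp
  simp only [hstar] at key
  linear_combination (norm := abel) -key
end

section
/- Let G be a group acting on a group A by automorphisms, and let π: G → A be a bijective map satisfying the 1-cocycle condition π(gh) = π(g)·(g ▸ π(h)) for all g,h ∈ G. Then the operation a ∘ b := π(π⁻¹(a) π⁻¹(b)) on A, together with the given multiplication of A, makes (A, ·, ∘) a skew left brace. -/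
/-- Let `G` act on a group `A` by automorphisms and `π : G → A` be a bijective
1-cocycle: `π(gh) = π(g)·(g ▸ π(h))`. Then `a ∘ b := π(π⁻¹(a)·π⁻¹(b))` together with
the multiplication of `A` makes `(A,·,∘)` a skew left brace. -/
theorem bijective_one_cocycle_gives_skewLeftBrace {G A : Type*} [Group G] [Group A]
    (φ : G →* MulAut A) (π : G ≃ A)
    (hπ : ∀ g h : G, π (g * h) = π g * φ g (π h))
    (circ : A → A → A)
    (hcirc : ∀ a b : A, circ a b = π (π.symm a * π.symm b)) :
    (∀ a b c : A, circ (circ a b) c = circ a (circ b c)) ∧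
    (∀ a : A, circ 1 a = a ∧ circ a 1 = a) ∧
    (∀ a : A, ∃ b, circ a b = 1 ∧ circ b a = 1) ∧
    (∀ a b c : A, circ a (b * c) = circ a b * a⁻¹ * circ a c) := by
  have hone : π 1 = 1 := by
    have := hπ 1 1
    simp only [mul_one, map_one, MulAut.one_apply] at this
    exact left_eq_mul.mp this
  have hsymm1 : π.symm 1 = 1 := by
    rw [← hone, Equiv.symm_apply_apply]
  refine ⟨?_, ?_, ?_, ?_⟩
  · intro a b c
    simp [hcirc, mul_assoc]
  · intro a
    simp [hcirc, hsymm1]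
  · intro a
    refine ⟨π (π.symm a)⁻¹, ?_, ?_⟩ <;> simp [hcirc, hone]
  · intro a b c
    simp only [hcirc]
    rw [hπ, hπ, hπ]
    simp [mul_assoc, ← map_mul]
end
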